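/- arXiv:2405.16154 — 2 statements merged into one kernel-verified Lean document; each statement's English description precedes it below -/
import Mathlib

section
/- Let p, q be primes with q dividing (p^p-1)/(p-1), let M in GL_p(F_p) have order q, and let w be a nonzero vector in V = F_p^p. Then the vectors (M^i - I)w for i = 1, 2, ..., p span V over F_p. -/
/-!
Let `f` be the endomorphism `x ↦ M x`. As `q ∣ (p ^ p - 1) / (p - 1)` but `p ≢ 1 (mod q)`, the
residue of `p` has order `p` modulo `q`. The group `⟨f⟩` of order `q` acts on every `f`-invariant
subspace `W`, so `|W| ≡ |W ∩ ker (f - 1)| (mod q)`, i.e. `dim W ≡ dim (W ∩ ker (f - 1)) (mod p)`.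
For `W = V` this forces `ker (f - 1) = 0` (as `f ≠ 1`), and then every invariant subspace has
dimension `0` or `p`. By Cayley–Hamilton the span of `fⁱ u`, `i < p`, is invariant, so for
`u = (f - 1) w ≠ 0` it is all of `V`; finally `fⁱ u = (fⁱ⁺¹ - 1) w - (fⁱ - 1) w`.
-/

open Module Submodule LinearMap Polynomial

theorem orderOf_natCast_eq_of_dvd_geom_sum {p q : ℕ} [Fact p.Prime] [Fact q.Prime]
    (h : q ∣ ∑ i ∈ Finset.range p, p ^ i) : orderOf (p : ZMod q) = p := by
  have hsum : ∑ i ∈ Finset.range p, (p : ZMod q) ^ i = 0 := by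
    exact_mod_cast (ZMod.natCast_eq_zero_iff _ _).mpr h
  apply orderOf_eq_prime
  · have h := geom_sum_mul (p : ZMod q) p
    rwa [hsum, zero_mul, eq_comm, sub_eq_zero] at h
  · -- otherwise the geometric sum would be `p ≡ 1`
    intro h1
    simp [h1] at hsum

theorem Submodule.eq_bot_or_eq_top_of_finrank_dvd {K V : Type*} [Field K] [AddCommGroup V]
    [Module K V] [FiniteDimensional K V] {W : Submodule K V} (h : finrank K V ∣ finrank K W) :
    W = ⊥ ∨ W = ⊤ := by
  rcases Nat.eq_zero_or_pos (finrank K W) with h0 | hpos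
  · exact Or.inl (finrank_eq_zero.mp h0)
  · exact Or.inr (eq_top_of_finrank_eq ((finrank_le W).antisymm (Nat.le_of_dvd hpos h)))

namespace Module.End

theorem natCard_modEq_natCard_ker_sub_one {R V : Type*} [Ring R] [AddCommGroup V] [Module R V]
    [Finite V] {q : ℕ} [Fact q.Prime] {f : End R V} (hf : f ^ q = 1) :
    Nat.card V ≡ Nat.card (ker (f - 1)) [MOD q] := by
  classical
  have := Fintype.ofFinite V
  let g : Function.End V := ⇑f
  have hg : g ^ q ^ 1 = 1 := by
    rw [pow_one]
    exact (coe_pow f q).symm.trans (by rw [hf]; rfl)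
  have hfix : Nat.card (Function.fixedPoints g) = Nat.card (ker (f - 1)) :=
    Nat.card_congr <| Equiv.subtypeEquivRight fun v => by
      simp [g, Function.IsFixedPt, sub_eq_zero]
  rw [← hfix, Nat.card_eq_fintype_card, Nat.card_eq_fintype_card]
  exact Equiv.Perm.card_fixedPoints_modEq hg

variable {K V : Type*} [Field K] [AddCommGroup V] [Module K V] [FiniteDimensional K V]

theorem finrank_modEq_finrank_ker_sub_one [Finite K] {q : ℕ} [Fact q.Prime] {f : End K V}
    (hf : f ^ q = 1) (hK : IsOfFinOrder (Nat.card K : ZMod q)) :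
    finrank K V ≡ finrank K (ker (f - 1)) [MOD orderOf (Nat.card K : ZMod q)] := by
  have : Finite V := Module.finite_of_finite K
  have h := natCard_modEq_natCard_ker_sub_one hf
  rw [natCard_eq_pow_finrank (K := K) (V := V),
    natCard_eq_pow_finrank (K := K) (V := ker (f - 1)), ← ZMod.natCast_eq_natCast_iff,
    Nat.cast_pow, Nat.cast_pow] at h
  exact hK.pow_eq_pow_iff_modEq.mp h

section OrderOfCardEqFinrank

variable [Finite K] [Nontrivial V] {q : ℕ} [Fact q.Prime] {f : End K V}
  (hK : orderOf (Nat.card K : ZMod q) = finrank K V)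
include hK

theorem ker_sub_one_eq_bot (hf : orderOf f = q) : ker (f - 1) = ⊥ := by
  have hfin : IsOfFinOrder (Nat.card K : ZMod q) := orderOf_pos_iff.mp (hK ▸ finrank_pos)
  have h := finrank_modEq_finrank_ker_sub_one (hf ▸ pow_orderOf_eq_one f) hfin
  rw [hK] at h
  refine (eq_bot_or_eq_top_of_finrank_dvd ((h.dvd_iff dvd_rfl).mp dvd_rfl)).resolve_right
    fun htop => ?_
  rw [sub_eq_zero.mp (ker_eq_top.mp htop), orderOf_one] at hf
  exact (Fact.out : q.Prime).one_lt.ne hf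

theorem eq_bot_or_eq_top_of_mem_invtSubmodule (hf : orderOf f = q) {W : Submodule K V}
    (hW : W ∈ f.invtSubmodule) : W = ⊥ ∨ W = ⊤ := by
  have hfin : IsOfFinOrder (Nat.card K : ZMod q) := orderOf_pos_iff.mp (hK ▸ finrank_pos)
  have hW' : ∀ v ∈ W, f v ∈ W := hW
  have hg : f.restrict hW' ^ q = 1 := by
    ext v
    simp [pow_restrict, ← hf, pow_orderOf_eq_one]
  have hker : ker (f.restrict hW' - 1) = ⊥ := ker_eq_bot'.mpr fun v hv => by
    have : (v : V) ∈ ker (f - 1) := congrArg Subtype.val hv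
    rw [ker_sub_one_eq_bot hK hf, mem_bot] at this
    exact Subtype.ext this
  have h := finrank_modEq_finrank_ker_sub_one hg hfin
  rw [hker, finrank_bot, hK] at h
  exact eq_bot_or_eq_top_of_finrank_dvd (Nat.modEq_zero_iff_dvd.mp h)

end OrderOfCardEqFinrank

theorem pow_apply_mem_span_pow_apply [Nontrivial V] (f : End K V) (u : V) (k : ℕ) :
    (f ^ k) u ∈ span K ((fun i ↦ (f ^ i) u) '' Set.Iio (finrank K V)) := by
  have hχ : f.charpoly ≠ 1 := ne_of_apply_ne natDegree <| by
    rw [charpoly_natDegree, natDegree_one]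
    exact finrank_pos.ne'
  have hdeg := f.charpoly_natDegree ▸ natDegree_modByMonic_lt (X ^ k) f.charpoly_monic hχ
  rw [pow_eq_aeval_mod_charpoly, aeval_eq_sum_range' hdeg, LinearMap.sum_apply]
  exact sum_mem fun i hi => smul_mem _ _ (subset_span ⟨i, Finset.mem_range.mp hi, rfl⟩)

theorem span_pow_apply_eq_top {f : End K V} (hf : ∀ W ∈ f.invtSubmodule, W = ⊥ ∨ W = ⊤)
    {u : V} (hu : u ≠ 0) : span K ((fun i ↦ (f ^ i) u) '' Set.Iio (finrank K V)) = ⊤ := by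
  have : Nontrivial V := ⟨⟨u, 0, hu⟩⟩
  refine (hf _ ?_).resolve_left fun hbot => hu ?_
  · rw [mem_invtSubmodule, span_le]
    rintro _ ⟨i, -, rfl⟩
    rw [SetLike.mem_coe, mem_comap, ← mul_apply, ← pow_succ']
    exact pow_apply_mem_span_pow_apply f u (i + 1)
  · rw [← mem_bot K, ← hbot]
    exact subset_span ⟨0, finrank_pos, one_apply u⟩

end Module.End

open Module.End in
theorem stmt_6 (p q : ℕ) (hp : p.Prime) (hq : q.Prime)
    (hdvd : q ∣ ∑ i ∈ Finset.range p, p ^ i)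
    (M : GL (Fin p) (ZMod p)) (hM : orderOf M = q)
    (w : Fin p → ZMod p) (hw : w ≠ 0) :
    Submodule.span (ZMod p)
      {v : Fin p → ZMod p | ∃ i : ℕ, 1 ≤ i ∧ i ≤ p ∧
        v = ((M : Matrix (Fin p) (Fin p) (ZMod p)) ^ i - 1).mulVec w} = ⊤ := by
  have := Fact.mk hp
  have := Fact.mk hq
  set S := {v : Fin p → ZMod p | ∃ i : ℕ, 1 ≤ i ∧ i ≤ p ∧
    v = ((M : Matrix (Fin p) (Fin p) (ZMod p)) ^ i - 1).mulVec w}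
  let φ := (Matrix.toLinAlgEquiv' : Matrix (Fin p) (Fin p) (ZMod p) ≃ₐ[ZMod p] _).toMonoidHom.comp
    (Units.coeHom _)
  set f := φ M
  have hf : orderOf f = q :=
    hM ▸ orderOf_injective φ (Matrix.toLinAlgEquiv'.injective.comp Units.val_injective) M
  have hK : orderOf (Nat.card (ZMod p) : ZMod q) = finrank (ZMod p) (Fin p → ZMod p) := by
    rw [Nat.card_zmod, finrank_fin_fun]
    exact orderOf_natCast_eq_of_dvd_geom_sum hdvd
  have hu : (f - 1) w ≠ 0 := fun h => hw (ker_eq_bot'.mp (ker_sub_one_eq_bot hK hf) w h)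
  have hS : ∀ i ≤ p, (f ^ i - 1) w ∈ span (ZMod p) S := by
    rintro (_ | i) hi
    · simp
    · exact subset_span ⟨i + 1, by omega, hi, by simp [f, φ, ← map_pow, Matrix.sub_mulVec]⟩
  have hirr W := eq_bot_or_eq_top_of_mem_invtSubmodule hK hf (W := W)
  rw [eq_top_iff, ← span_pow_apply_eq_top hirr hu, span_le]
  rintro _ ⟨i, hi, rfl⟩
  have hdiff : f ^ i * (f - 1) = (f ^ (i + 1) - 1) - (f ^ i - 1) := by
    rw [mul_sub, mul_one, ← pow_succ, sub_sub_sub_cancel_right]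
  rw [finrank_fin_fun, Set.mem_Iio] at hi
  change (f ^ i * (f - 1)) w ∈ span (ZMod p) S
  rw [hdiff, LinearMap.sub_apply]
  exact sub_mem (hS _ hi) (hS _ hi.le)
end

section
/- Let p, q be primes with q dividing (p^p-1)/(p-1), and let N = V ⋊ C_q with V = F_p^p and C_q acting via a matrix M of order q. Then the Sylow p-subgroup V is the unique nontrivial proper normal subgroup of N. -/
/-!
A normal subgroup `H` meets `V` in a subgroup stable under `σ`, i.e. an `M`-invariant subspace.
Since `p` has order exactly `p` modulo `q`, the prime `q` does not divide `|GL_d(𝔽_p)|` for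
`d < p`. So on a proper nonzero invariant subspace `W`, and on `V ⧸ W`, the element `M` of order
`q` would act trivially; then `(M - 1)² = 0`, and `M^q = 1 + q(M - 1)` with `q ≠ p` forces
`M = 1`. Hence `H ∩ V` is `1` or `V`. If it is `1`, then `H` centralizes `V`, and the action being
faithful forces `H = 1`. If it is `V`, then `H / V` is a subgroup of `C_q`, so `H = V` or `H = N`.
-/

theorem orderOf_natCast_eq_self_of_dvd_geom_sum {p q : ℕ} (hp : p.Prime) [Fact q.Prime]
    (hdvd : q ∣ ∑ i ∈ Finset.range p, p ^ i) : orderOf (p : ZMod q) = p := by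
  have hsum : ∑ i ∈ Finset.range p, (p : ZMod q) ^ i = 0 := by
    exact_mod_cast (ZMod.natCast_eq_zero_iff _ q).mpr hdvd
  have hpow : (p : ZMod q) ^ p = 1 := by
    rw [← sub_eq_zero, ← geom_sum_mul, hsum, zero_mul]
  refine ((Nat.dvd_prime hp).mp (orderOf_dvd_of_pow_eq_one hpow)).resolve_left fun h1 => ?_
  rw [orderOf_eq_one_iff] at h1
  -- if `p ≡ 1 (mod q)`, the sum is `≡ p ≡ 1`, not `0`
  simp [h1] at hsum

theorem natCast_ne_zero_of_orderOf_natCast_eq_self {p q : ℕ} (hp : p.Prime) (hq : q.Prime)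
    (h : orderOf (p : ZMod q) = p) : (q : ZMod p) ≠ 0 := by
  have : Fact p.Prime := ⟨hp⟩
  rw [Ne, ZMod.natCast_eq_zero_iff, Nat.prime_dvd_prime_iff_eq hp hq]
  rintro rfl
  rw [ZMod.natCast_self, orderOf_zero] at h
  exact hp.ne_zero h.symm

theorem not_dvd_card_GL_of_lt_orderOf {K : Type*} [Field K] [Fintype K] {q d : ℕ} [Fact q.Prime]
    (hd : d < orderOf (Fintype.card K : ZMod q)) : ¬ q ∣ Nat.card (GL (Fin d) K) := by
  set r := Fintype.card K
  rw [Matrix.card_GL_field, Prime.dvd_finsetProd_iff (Nat.prime_iff.mp Fact.out)]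
  rintro ⟨i, -, hi⟩
  have hid : (i : ℕ) ≤ d := i.2.le
  have hr : IsUnit (r : ZMod q) := (orderOf_pos_iff.mp (by omega)).isUnit
  have hcong : r ^ (i : ℕ) ≡ r ^ d [MOD q] :=
    (Nat.modEq_iff_dvd' (Nat.pow_le_pow_right Fintype.card_pos hid)).mpr hi
  have hri : (r : ZMod q) ^ (i : ℕ) * r ^ (d - i) = r ^ (i : ℕ) * 1 := by
    rw [← pow_add, Nat.add_sub_cancel' hid, mul_one]
    exact_mod_cast ((ZMod.natCast_eq_natCast_iff _ _ _).mpr hcong).symm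
  exact pow_ne_one_of_lt_orderOf (by omega) (by omega) ((hr.pow _).mul_left_cancel hri)

theorem one_add_pow_of_sq_eq_zero {R : Type*} [Ring R] {a : R} (ha : a ^ 2 = 0) (n : ℕ) :
    (1 + a) ^ n = 1 + n * a := by
  induction n with
  | zero => simp
  | succ n ih =>
    rw [pow_succ, ih, Nat.cast_succ]
    have : (n : R) * a * a = 0 := by rw [mul_assoc, ← sq, ha, mul_zero]
    simp only [mul_add, add_mul, mul_one, one_mul, this]
    abel

theorem eq_one_of_pow_eq_one_of_sq_sub_one_eq_zero {R : Type*} [Ring R] {x : R} {n : ℕ}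
    (hn : IsUnit (n : R)) (hx : x ^ n = 1) (hx2 : (x - 1) ^ 2 = 0) : x = 1 := by
  have h := one_add_pow_of_sq_eq_zero hx2 n
  rw [add_sub_cancel, hx, left_eq_add, hn.mul_right_eq_zero, sub_eq_zero] at h
  exact h

namespace Module.End

variable {K V : Type*} [Field K] [AddCommGroup V] [Module K V] [FiniteDimensional K V]

theorem natCard_units_eq_natCard_GL :
    Nat.card (Module.End K V)ˣ = Nat.card (GL (Fin (Module.finrank K V)) K) :=
  Nat.card_congr
    (Units.mapEquiv (LinearMap.toMatrixAlgEquiv (Module.finBasis K V)).toMulEquiv).toEquiv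

theorem eq_one_of_pow_eq_one_of_not_dvd_card_GL {q : ℕ} (hq : q.Prime)
    (hV : ¬ q ∣ Nat.card (GL (Fin (Module.finrank K V)) K)) {f : Module.End K V}
    (hf : f ^ q = 1) : f = 1 := by
  let u := (IsUnit.of_pow_eq_one hf hq.ne_zero).unit
  have hu : u ^ q = 1 := Units.ext (by simpa [u] using hf)
  rcases (Nat.dvd_prime hq).mp (orderOf_dvd_of_pow_eq_one hu) with h1 | hq'
  · simpa [u] using congrArg Units.val (orderOf_eq_one_iff.mp h1)
  · rw [← natCard_units_eq_natCard_GL, ← hq'] at hV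
    exact absurd (orderOf_dvd_natCard u) hV

theorem eq_bot_or_eq_top_of_le_comap {q : ℕ} (hq : q.Prime) (hqK : (q : K) ≠ 0)
    (hGL : ∀ d < Module.finrank K V, ¬ q ∣ Nat.card (GL (Fin d) K))
    {E : Module.End K V} (hE : E ^ q = 1) (hE1 : E ≠ 1) {W : Submodule K V}
    (hW : W ≤ W.comap E) : W = ⊥ ∨ W = ⊤ := by
  by_contra! hWne
  obtain ⟨hbot, htop⟩ := hWne
  have hfix : ∀ v ∈ W, E v = v := by
    have h := eq_one_of_pow_eq_one_of_not_dvd_card_GL hq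
      (f := E.restrict hW) (hGL _ (Submodule.finrank_lt htop)) (by rw [pow_restrict]; ext; simp [hE])
    exact fun v hv => congrArg Subtype.val (LinearMap.congr_fun h ⟨v, hv⟩)
  have hquot : ∀ v, E v - v ∈ W := by
    have hrank : Module.finrank K (V ⧸ W) < Module.finrank K V := by
      have := Submodule.finrank_quotient_add_finrank W
      have := Submodule.finrank_eq_zero.not.mpr hbot
      omega
    have h := eq_one_of_pow_eq_one_of_not_dvd_card_GL (f := W.mapQ W E hW) hq (hGL _ hrank)
      (by rw [← Submodule.mapQ_pow]; ext; simp [hE])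
    exact fun v => (Submodule.Quotient.eq W).mp (LinearMap.congr_fun h (W.mkQ v))
  refine hE1 (eq_one_of_pow_eq_one_of_sq_sub_one_eq_zero ?_ hE ?_)
  · simpa using hqK.isUnit.map (algebraMap K (Module.End K V))
  · ext v
    simp [sq, hfix _ (hquot v)]

end Module.End

theorem MonoidHom.injective_of_prime_card {G H : Type*} [Group G] [Group H]
    [Fact (Nat.card G).Prime] {f : G →* H} (hf : f ≠ 1) : Function.Injective f :=
  (MonoidHom.ker_eq_bot_iff f).mp <| f.ker.eq_bot_or_eq_top_of_prime_card.resolve_right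
    fun h => hf (MonoidHom.ext fun g => f.mem_ker.mp (h ▸ Subgroup.mem_top g))

namespace SemidirectProduct

variable {N G : Type*} [Group N] [Group G] {φ : G →* MulAut N}

instance normal_range_inl : (inl : N →* N ⋊[φ] G).range.Normal :=
  range_inl_eq_ker_rightHom (φ := φ) ▸ rightHom.normal_ker

theorem apply_mem_comap_inl {H : Subgroup (N ⋊[φ] G)} (hH : H.Normal) (g : G) {n : N}
    (hn : n ∈ H.comap inl) : φ g n ∈ H.comap inl := by
  rw [Subgroup.mem_comap, inl_aut, map_inv]
  exact hH.conj_mem _ hn _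

theorem eq_range_inl_or_eq_top_of_comap_inl_eq_top [Fact (Nat.card G).Prime]
    {H : Subgroup (N ⋊[φ] G)} (hH : H.comap inl = ⊤) : H = inl.range ∨ H = ⊤ := by
  have hle : (rightHom : N ⋊[φ] G →* G).ker ≤ H := by
    rintro _ hx
    obtain ⟨n, rfl⟩ := (range_inl_eq_ker_rightHom (φ := φ)).ge hx
    exact Subgroup.mem_comap.mp (hH ▸ Subgroup.mem_top n)
  rcases (H.map rightHom).eq_bot_or_eq_top_of_prime_card with h | h
  · left
    rw [range_inl_eq_ker_rightHom]
    exact le_antisymm ((Subgroup.map_eq_bot_iff _).mp h) hle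
  · right
    rw [← Subgroup.comap_map_eq_self hle, h, Subgroup.comap_top]

theorem eq_bot_of_comap_inl_eq_bot {N : Type*} [CommGroup N] {φ : G →* MulAut N}
    (hφ : Function.Injective φ) {H : Subgroup (N ⋊[φ] G)} (hH : H.Normal)
    (hHN : H.comap inl = ⊥) : H = ⊥ := by
  have hcomm : H ≤ Subgroup.centralizer (inl : N →* N ⋊[φ] G).range := by
    rw [← Subgroup.commutator_eq_bot_iff_le_centralizer, eq_bot_iff]
    refine (Subgroup.commutator_le_inf _ _).trans fun x ⟨hxH, n, hn⟩ => ?_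
    subst hn
    rw [Subgroup.mem_bot, (inl_injective.eq_iff' (map_one _)), ← Subgroup.mem_bot, ← hHN]
    exact hxH
  refine eq_bot_iff.mpr fun h hh => ?_
  have hright : h.right = 1 := hφ <| MulEquiv.ext fun n => by
    have := congrArg left (Subgroup.mem_centralizer_iff.mp (hcomm hh) (inl n) ⟨n, rfl⟩)
    simp only [mul_left, left_inl, right_inl, map_one, MulAut.one_apply] at this
    rw [map_one, MulAut.one_apply]
    exact mul_left_cancel (this.symm.trans (mul_comm _ _))
  have hleft : h.left ∈ H.comap inl := by
    rwa [Subgroup.mem_comap, ← mul_one (inl h.left), ← map_one inr, ← hright,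
      inl_left_mul_inr_right]
  rw [hHN, Subgroup.mem_bot] at hleft
  rw [Subgroup.mem_bot, ← inl_left_mul_inr_right h, hleft, hright, map_one, map_one, one_mul]

end SemidirectProduct

open SemidirectProduct

theorem stmt_16 (p q : ℕ) (hp : p.Prime) (hq : q.Prime)
    (hdvd : q ∣ ∑ i ∈ Finset.range p, p ^ i)
    (M : GL (Fin p) (ZMod p)) (hM : orderOf M = q)
    (φ : Multiplicative (ZMod q) →* MulAut (Multiplicative (Fin p → ZMod p)))
    (hφ : ∀ v : Fin p → ZMod p,
      φ (Multiplicative.ofAdd (1 : ZMod q)) (Multiplicative.ofAdd v) =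
        Multiplicative.ofAdd ((M : Matrix (Fin p) (Fin p) (ZMod p)).mulVec v)) :
    ((SemidirectProduct.inl :
        Multiplicative (Fin p → ZMod p) →*
          SemidirectProduct (Multiplicative (Fin p → ZMod p)) (Multiplicative (ZMod q)) φ).range).Normal ∧
      ∀ H : Subgroup
          (SemidirectProduct (Multiplicative (Fin p → ZMod p)) (Multiplicative (ZMod q)) φ),
        H.Normal → H ≠ ⊥ → H ≠ ⊤ →
          H = (SemidirectProduct.inl :
            Multiplicative (Fin p → ZMod p) →* _).range := by
  have : Fact p.Prime := ⟨hp⟩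
  have : Fact q.Prime := ⟨hq⟩
  have : Fact (Nat.card (Multiplicative (ZMod q))).Prime := by simpa using this
  refine ⟨normal_range_inl, fun H hH hbot htop => ?_⟩
  have hord : orderOf (p : ZMod q) = p := orderOf_natCast_eq_self_of_dvd_geom_sum hp hdvd
  set E : Module.End (ZMod p) (Fin p → ZMod p) := ↑(Matrix.GeneralLinearGroup.toLin M)
  have hEφ (v : Fin p → ZMod p) : Multiplicative.ofAdd (E v) = φ (.ofAdd 1) (.ofAdd v) := by
    rw [hφ, Matrix.GeneralLinearGroup.toLin_apply, Matrix.mulVecLin_apply]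
  have hEord : orderOf E = q := by
    rw [orderOf_units, MulEquiv.orderOf_eq, hM]
  have hE1 : E ≠ 1 := fun h => hq.one_lt.ne (by rw [← hEord, h, orderOf_one])
  have hφinj : Function.Injective φ := MonoidHom.injective_of_prime_card fun h =>
    hE1 (LinearMap.ext fun v => by simpa [h] using hEφ v)
  let e : Subgroup (Multiplicative (Fin p → ZMod p)) ≃o Submodule (ZMod p) (Fin p → ZMod p) :=
    Subgroup.toAddSubgroup'.trans (AddSubgroup.toZModSubmodule p)
  have hinv : e (H.comap inl) ≤ (e (H.comap inl)).comap E := fun v hv => by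
    have := apply_mem_comap_inl hH (.ofAdd 1) (n := .ofAdd v) hv
    rwa [← hEφ] at this
  rcases Module.End.eq_bot_or_eq_top_of_le_comap hq
      (natCast_ne_zero_of_orderOf_natCast_eq_self hp hq hord)
      (fun d hd => not_dvd_card_GL_of_lt_orderOf (by simpa [hord] using hd))
      (hEord ▸ pow_orderOf_eq_one E) hE1 hinv with h | h
  · exact absurd (eq_bot_of_comap_inl_eq_bot hφinj hH ((map_eq_bot_iff e).mp h)) hbot
  · exact (eq_range_inl_or_eq_top_of_comap_inl_eq_top ((map_eq_top_iff e).mp h)).resolve_right htop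
end
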